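/- arXiv:2412.04435 — 8 statements merged into one kernel-verified Lean document; each statement's English description precedes it below -/
import Mathlib

section
/- (Proposition 1.) Let N ≥ 1, L > 0, μ < L, and γ ∈ (0, 2/L) with 1 − γL ≠ 0 and 1 − γμ ≠ 0. Set ρ = 1 − γL and η = 1 − γμ, and suppose E_N(η) = E_N(ρ) (i.e., γ is the optimal stepsize γ*(N, μ, L)). Then ρ ∈ (−1, 0), η ∈ (−ρ, ∞), and T_k(ρ, η) ≥ 0 for k = 1, …, N−1. -/
open Finset

noncomputable def Efun (k : ℕ) (x : ℝ) : ℝ := ∑ j ∈ Finset.Icc 1 (2 * k), x ^ (-(j : ℤ))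

noncomputable def Ffun (k : ℕ) (x : ℝ) : ℝ := ∑ j ∈ Finset.Icc 1 k, x ^ j

noncomputable def Tfun (k : ℕ) (ρ η : ℝ) : ℝ := Efun k η - Efun k ρ

/-!
Pairing consecutive terms gives `E_k(x) = (x + 1) · Σ_{i=1}^k (x⁻²)ⁱ`. If `ρ > 0` then
`0 < ρ < η` and every term `x⁻ʲ` of `E_N` is strictly smaller at `η`; if `η ≤ -ρ` then
`x⁻²` is at least as large at `η` while `η + 1 > ρ + 1 > 0`. Either way `E_N(η) ≠ E_N(ρ)`.
Finally `T_k = Σ_{i ≤ k} dᵢ` with `dᵢ = (η + 1) uⁱ - (ρ + 1) vⁱ`, `0 < u = η⁻² ≤ v = ρ⁻²`, so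
`dᵢ` changes sign at most once, from positive to nonpositive; since the full sum `T_N`
vanishes, every partial sum is nonnegative.
-/

lemma Ffun_succ (n : ℕ) (y : ℝ) : Ffun (n + 1) y = Ffun n y + y ^ (n + 1) :=
  sum_Icc_succ_top (by omega) _

lemma Ffun_pos {n : ℕ} (hn : n ≠ 0) {y : ℝ} (hy : 0 < y) : 0 < Ffun n y :=
  sum_pos (fun _ _ => pow_pos hy _) (nonempty_Icc.mpr (by omega))

lemma Ffun_strictMonoOn {n : ℕ} (hn : n ≠ 0) : StrictMonoOn (Ffun n) (Set.Ici 0) :=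
  fun _ ha _ _ hab => sum_lt_sum_of_nonempty (nonempty_Icc.mpr (by omega))
    fun _ hj => pow_lt_pow_left₀ hab ha (by simp at hj; omega)

lemma Ffun_two_mul (k : ℕ) {y : ℝ} (hy : y ≠ 0) :
    Ffun (2 * k) y = ∑ i ∈ Icc 1 k, (y⁻¹ + 1) * (y ^ 2) ^ i := by
  induction k with
  | zero => simp [Ffun]
  | succ k ih =>
    rw [sum_Icc_succ_top (by omega), ← ih, show 2 * (k + 1) = 2 * k + 1 + 1 by ring,
      Ffun_succ, Ffun_succ]
    field_simp
    ring

lemma Efun_eq_Ffun (k : ℕ) (x : ℝ) : Efun k x = Ffun (2 * k) x⁻¹ := by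
  simp [Efun, Ffun, inv_pow]

lemma Efun_eq_sum_pairs (k : ℕ) {x : ℝ} (hx : x ≠ 0) :
    Efun k x = ∑ i ∈ Icc 1 k, (x + 1) * (x⁻¹ ^ 2) ^ i := by
  rw [Efun_eq_Ffun, Ffun_two_mul k (inv_ne_zero hx), inv_inv]

lemma Efun_eq_mul_Ffun (k : ℕ) {x : ℝ} (hx : x ≠ 0) :
    Efun k x = (x + 1) * Ffun k (x⁻¹ ^ 2) := by
  rw [Efun_eq_sum_pairs k hx, Ffun, mul_sum]

lemma Efun_strictAntiOn {n : ℕ} (hn : n ≠ 0) : StrictAntiOn (Efun n) (Set.Ioi 0) := by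
  intro a ha b hb hab
  rw [Efun_eq_Ffun, Efun_eq_Ffun]
  exact Ffun_strictMonoOn (by omega) (Set.mem_Ici.mpr (inv_pos.mpr hb).le)
    (Set.mem_Ici.mpr (inv_pos.mpr ha).le) (inv_strictAntiOn ha hb hab)

lemma inv_sq_le_inv_sq {a b : ℝ} (ha : a ≠ 0) (hab : |a| ≤ |b|) : b⁻¹ ^ 2 ≤ a⁻¹ ^ 2 := by
  rw [← sq_abs b⁻¹, ← sq_abs a⁻¹, abs_inv, abs_inv]
  gcongr

lemma Efun_lt_Efun_of_abs_le {n : ℕ} (hn : n ≠ 0) {ρ η : ℝ} (hρ : -1 < ρ) (hρη : ρ < η)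
    (hη0 : η ≠ 0) (habs : |η| ≤ |ρ|) : Efun n ρ < Efun n η := by
  have hρ0 : ρ ≠ 0 := abs_pos.mp ((abs_pos.mpr hη0).trans_le habs)
  have hFρ : 0 < Ffun n (ρ⁻¹ ^ 2) := Ffun_pos hn (by positivity)
  have hF : Ffun n (ρ⁻¹ ^ 2) ≤ Ffun n (η⁻¹ ^ 2) :=
    (Ffun_strictMonoOn hn).monotoneOn (Set.mem_Ici.mpr (sq_nonneg _))
      (Set.mem_Ici.mpr (sq_nonneg _)) (inv_sq_le_inv_sq hη0 habs)
  rw [Efun_eq_mul_Ffun n hρ0, Efun_eq_mul_Ffun n hη0]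
  calc (ρ + 1) * Ffun n (ρ⁻¹ ^ 2) < (η + 1) * Ffun n (ρ⁻¹ ^ 2) := by gcongr
    _ ≤ (η + 1) * Ffun n (η⁻¹ ^ 2) := by gcongr; linarith

lemma mul_pow_succ_le_mul_pow_succ {a b u v : ℝ} {i : ℕ} (ha : 0 ≤ a) (hu : 0 ≤ u) (huv : u ≤ v)
    (h : a * u ^ i ≤ b * v ^ i) : a * u ^ (i + 1) ≤ b * v ^ (i + 1) := by
  have hau : 0 ≤ a * u ^ i := by positivity
  calc a * u ^ (i + 1) = a * u ^ i * u := by ring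
    _ ≤ a * u ^ i * v := by gcongr
    _ ≤ b * v ^ i * v := by gcongr; linarith
    _ = b * v ^ (i + 1) := by ring

lemma sum_Icc_nonneg_of_sum_eq_zero {α : Type*} [AddCommGroup α] [LinearOrder α]
    [IsOrderedAddMonoid α] {d : ℕ → α} (hd : ∀ i, d i ≤ 0 → d (i + 1) ≤ 0) {k n : ℕ}
    (hn : ∑ i ∈ Icc 1 n, d i = 0) (hk : k ≤ n) : 0 ≤ ∑ i ∈ Icc 1 k, d i := by
  have hmono : ∀ i j, i ≤ j → d i ≤ 0 → d j ≤ 0 := fun i j hij hi => by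
    induction j, hij using Nat.le_induction with
    | base => exact hi
    | succ j _ ih => exact hd j ih
  have hIcc : ∀ m, Icc 1 m = Ioc 0 m := fun m => Icc_add_one_left_eq_Ioc 0 m
  simp only [hIcc] at hn ⊢
  rcases le_or_gt (d (k + 1)) 0 with hnext | hnext
  · have htail : ∑ i ∈ Ioc k n, d i ≤ 0 :=
      sum_nonpos fun i hi => hmono (k + 1) i (by simp at hi; omega) hnext
    have hsplit := sum_Ioc_consecutive d (Nat.zero_le k) hk
    rw [hn] at hsplit
    rw [eq_neg_of_add_eq_zero_left hsplit]
    exact neg_nonneg.mpr htail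
  · exact sum_nonneg fun i hi => not_lt.mp fun hneg =>
      (hmono i (k + 1) (by simp at hi; omega) hneg.le).not_gt hnext

lemma Tfun_eq_sum (k : ℕ) {ρ η : ℝ} (hρ : ρ ≠ 0) (hη : η ≠ 0) :
    Tfun k ρ η = ∑ i ∈ Icc 1 k, ((η + 1) * (η⁻¹ ^ 2) ^ i - (ρ + 1) * (ρ⁻¹ ^ 2) ^ i) := by
  rw [Tfun, Efun_eq_sum_pairs k hη, Efun_eq_sum_pairs k hρ, sum_sub_distrib]

lemma Tfun_nonneg {n k : ℕ} {ρ η : ℝ} (hρ : ρ ≠ 0) (hη : 0 ≤ η + 1) (habs : |ρ| ≤ |η|)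
    (heq : Efun n η = Efun n ρ) (hk : k ≤ n) : 0 ≤ Tfun k ρ η := by
  have hη0 : η ≠ 0 := abs_pos.mp ((abs_pos.mpr hρ).trans_le habs)
  rw [Tfun_eq_sum k hρ hη0]
  refine sum_Icc_nonneg_of_sum_eq_zero (fun i hi => ?_) ?_ hk
  · rw [sub_nonpos] at hi ⊢
    exact mul_pow_succ_le_mul_pow_succ hη (sq_nonneg _) (inv_sq_le_inv_sq hρ habs) hi
  · rw [← Tfun_eq_sum n hρ hη0, Tfun, heq, sub_self]

/-- **Proposition 1.** For the optimal stepsize (characterized by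
`E_N(η) = E_N(ρ)` with `ρ = 1 - γL`, `η = 1 - γμ`), we have `ρ ∈ (-1, 0)`,
`η ∈ (-ρ, ∞)`, and `T_k(ρ, η) ≥ 0` for `k = 1, …, N-1`. -/
theorem optimal_stepsize_properties
    (N : ℕ) (hN : 1 ≤ N)
    (L μ γ : ℝ) (hL : 0 < L) (hμL : μ < L)
    (hγ0 : 0 < γ) (hγ2 : γ < 2 / L)
    (ρ η : ℝ) (hρ : ρ = 1 - γ * L) (hη : η = 1 - γ * μ)
    (hρ0 : ρ ≠ 0) (hη0 : η ≠ 0)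
    (hopt : Efun N η = Efun N ρ) :
    ρ ∈ Set.Ioo (-1 : ℝ) 0 ∧ -ρ < η ∧ ∀ k, 1 ≤ k → k ≤ N - 1 → 0 ≤ Tfun k ρ η := by
  have hN0 : N ≠ 0 := by omega
  have hρ1 : -1 < ρ := by
    have hγL := (lt_div_iff₀ hL).mp hγ2
    linarith
  have hρη : ρ < η := by
    have := mul_lt_mul_of_pos_left hμL hγ0
    linarith
  have hρneg : ρ < 0 := by
    by_contra! hρnonneg
    have hρpos := lt_of_le_of_ne hρnonneg (Ne.symm hρ0)
    exact (Efun_strictAntiOn hN0 hρpos (hρpos.trans hρη) hρη).ne hopt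
  have hηρ : -ρ < η := by
    by_contra! hηρ
    have habs : |η| ≤ |ρ| := by simpa using abs_le_abs hηρ (neg_le_neg hρη.le)
    exact (Efun_lt_Efun_of_abs_le hN0 hρ1 hρη hη0 habs).ne' hopt
  have habs : |ρ| ≤ |η| := by
    rw [abs_of_neg hρneg, abs_of_pos (by linarith)]
    exact hηρ.le
  exact ⟨⟨hρ1, hρneg⟩, hηρ, fun k _ hk =>
    Tfun_nonneg hρ0 (by linarith) habs hopt (hk.trans (Nat.sub_le N 1))⟩
end

section
/- (Proposition 2.) Let ρ ∈ (−1, 0), η ∈ (0, ∞), and N ∈ (0, ∞) be reals. Define ψ : [0, N] → ℝ by ψ(t) = log( (1 + (1−ρ)(N+t)) / (1 + (1−ρ)(N−t)) ) if η = 1, and ψ(t) = log( (−(η−ρ) + (1−ρ)η^{−t−N}) / (−(η−ρ) + (1−ρ)η^{t−N}) ) if η ≠ 1, where in the case η ≠ 1 it is assumed that the numerator and denominator of the ratio are nonzero and of the same sign for every t ∈ [0, N], so that the ratio is positive and ψ is well-defined. Then ψ is convex on [0, N]. -/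
/-!
Both cases have the form `ψ t = log (p (-t) / p t)`, with `p t = 1 + (1 - ρ) (N - t)` when
`η = 1` and `p t = ρ - η + (1 - ρ) η^(t - N)` otherwise; in both cases `p` has no zero on
`(-∞, N]`. Writing `κ = (log |p|)''`, we get `ψ'' t = κ (-t) - κ t`, so convexity on `[0, N]`
reduces to `κ t ≤ κ (-t)` for `0 < t < N`. For affine `p` this says `|p t| ≤ |p (-t)|`. For
`p t = A + B e^(L t)` one has `κ t = L² A B e^(L t) / p(t)²`, and since `e^(L t) e^(-L t) = 1`
the inequality reduces to `A B (A² - B²) L ≤ 0`, which follows from `A < 0 < B` and `L p(0) < 0`.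
-/

open Real Set

lemma HasDerivAt.comp_neg {f : ℝ → ℝ} {f' t : ℝ} (hf : HasDerivAt f f' (-t)) :
    HasDerivAt (fun x => f (-x)) (-f') t :=
  (hf.comp t (hasDerivAt_neg' t)).congr_deriv (mul_neg_one f')

theorem convexOn_log_comp_neg_div {p p' p'' : ℝ → ℝ} {N : ℝ}
    (hp : ∀ t, HasDerivAt p (p' t) t) (hp' : ∀ t, HasDerivAt p' (p'' t) t)
    (hne : ∀ t ∈ Icc (-N) N, p t ≠ 0)
    (hκ : ∀ t ∈ Ioo 0 N, (p'' t * p t - p' t * p' t) / p t ^ 2 ≤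
      (p'' (-t) * p (-t) - p' (-t) * p' (-t)) / p (-t) ^ 2) :
    ConvexOn ℝ (Icc 0 N) fun t => log (p (-t) / p t) := by
  have hne₂ : ∀ t ∈ Icc 0 N, p (-t) ≠ 0 ∧ p t ≠ 0 := fun t ⟨h0, hN⟩ =>
    ⟨hne _ ⟨neg_le_neg hN, by linarith⟩, hne _ ⟨by linarith, hN⟩⟩
  have hf : ∀ t ∈ Icc 0 N, HasDerivAt (fun t => log (p (-t) / p t))
      (-(p' (-t) / p (-t)) - p' t / p t) t := by
    intro t ht
    obtain ⟨h₁, h₂⟩ := hne₂ t ht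
    refine (((hp (-t)).comp_neg.div (hp t) h₂).log (div_ne_zero h₁ h₂)).congr_deriv ?_
    simp only [Pi.div_apply]
    field_simp
  have hf' : ∀ t ∈ Icc 0 N, HasDerivAt (fun t => -(p' (-t) / p (-t)) - p' t / p t)
      ((p'' (-t) * p (-t) - p' (-t) * p' (-t)) / p (-t) ^ 2 -
        (p'' t * p t - p' t * p' t) / p t ^ 2) t := by
    intro t ht
    obtain ⟨h₁, h₂⟩ := hne₂ t ht
    refine ((((hp' (-t)).div (hp (-t)) h₁).comp_neg.neg).sub
      ((hp' t).div (hp t) h₂)).congr_deriv ?_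
    ring
  exact convexOn_of_hasDerivWithinAt2_nonneg (convex_Icc 0 N)
    (fun t ht => (hf t ht).continuousAt.continuousWithinAt)
    (fun t ht => (hf t (interior_subset ht)).hasDerivWithinAt)
    (fun t ht => (hf' t (interior_subset ht)).hasDerivWithinAt)
    (fun t ht => sub_nonneg.2 (hκ t (by rwa [interior_Icc] at ht)))

theorem convexOn_log_add_mul_div_sub_mul {a b N : ℝ} (hb : 0 ≤ b) (hN : b * N < a) :
    ConvexOn ℝ (Icc 0 N) fun t => log ((a + b * t) / (a - b * t)) := by
  have hpos : ∀ t ≤ N, 0 < a - b * t := fun t ht => by nlinarith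
  have hp : ∀ t, HasDerivAt (fun t => a - b * t) (-b) t := fun t => by
    simpa using ((hasDerivAt_id t).const_mul b).const_sub a
  have h := convexOn_log_comp_neg_div (N := N) hp (fun _ => hasDerivAt_const _ (-b))
    (fun t ht => (hpos t ht.2).ne') fun t ⟨ht0, htN⟩ => by
      simp only [zero_mul, zero_sub, neg_mul_neg, neg_div]
      refine neg_le_neg (div_le_div_of_nonneg_left (mul_self_nonneg b) (pow_pos (hpos t htN.le) 2)
        (pow_le_pow_left₀ (hpos t htN.le).le ?_ 2))
      nlinarith
  simpa only [mul_neg, sub_neg_eq_add] using h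

lemma mul_exp_mul_sub_exp_mul_nonpos (L : ℝ) {s u : ℝ} (hsu : s ≤ u) :
    L * (exp (L * s) - exp (L * u)) ≤ 0 := by
  rcases le_total 0 L with hL | hL
  · exact mul_nonpos_of_nonneg_of_nonpos hL
      (sub_nonpos.2 (exp_le_exp.2 (mul_le_mul_of_nonneg_left hsu hL)))
  · exact mul_nonpos_of_nonpos_of_nonneg hL
      (sub_nonneg.2 (exp_le_exp.2 (mul_le_mul_of_nonpos_left hsu hL)))

lemma mul_exp_mul_sub_exp_mul_neg {L s u : ℝ} (hL : L ≠ 0) (hsu : s < u) :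
    L * (exp (L * s) - exp (L * u)) < 0 := by
  rcases hL.lt_or_gt with hL | hL
  · exact mul_neg_of_neg_of_pos hL
      (sub_pos.2 (exp_lt_exp.2 (mul_lt_mul_of_neg_left hsu hL)))
  · exact mul_neg_of_pos_of_neg hL
      (sub_neg.2 (exp_lt_exp.2 (mul_lt_mul_of_pos_left hsu hL)))

theorem convexOn_log_add_mul_exp_neg_div {A B L N : ℝ}
    (hne : ∀ t ∈ Icc (-N) N, A + B * exp (L * t) ≠ 0) (hsign : A * B * (A ^ 2 - B ^ 2) * L ≤ 0) :
    ConvexOn ℝ (Icc 0 N) fun t => log ((A + B * exp (L * -t)) / (A + B * exp (L * t))) := by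
  have hexp : ∀ c t, HasDerivAt (fun t => c * exp (L * t)) (L * c * exp (L * t)) t :=
    fun c t => ((((hasDerivAt_id' t).const_mul L).exp).const_mul c).congr_deriv (by ring)
  refine convexOn_log_comp_neg_div (p' := fun t => L * B * exp (L * t))
    (fun t => (hexp B t).const_add A) (fun t => hexp (L * B) t) hne ?_
  rintro t ⟨ht0, htN⟩
  have h₁ := hne t ⟨by linarith, htN.le⟩
  have h₂ := hne (-t) ⟨by linarith, by linarith⟩
  rw [div_le_div_iff₀ (by positivity) (by positivity)]
  have hxy : exp (L * -t) * exp (L * t) = 1 := by rw [← exp_add]; simp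
  have := mul_nonneg_of_nonpos_of_nonpos hsign
    (mul_exp_mul_sub_exp_mul_nonpos L (by linarith : -t ≤ t))
  linear_combination this + L ^ 2 * A * B ^ 3 * (exp (L * -t) - exp (L * t)) * hxy

lemma log_mul_sub_add_mul_rpow_neg {ρ η s : ℝ} (hη : 0 < η) (hη1 : η ≠ 1) (hρ : ρ ≤ 1)
    (hs : s ≤ 0) : log η * (ρ - η + (1 - ρ) * η ^ s) < 0 := by
  have hL : log η ≠ 0 := log_ne_zero_of_pos_of_ne_one hη hη1
  have hη' : η = exp (log η * 1) := by rw [mul_one, exp_log hη]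
  calc log η * (ρ - η + (1 - ρ) * η ^ s)
      = log η * (exp (log η * 0) - exp (log η * 1)) +
          (1 - ρ) * (log η * (exp (log η * s) - exp (log η * 0))) := by
        rw [rpow_def_of_pos hη, mul_zero, exp_zero, ← hη']; ring
    _ < 0 := add_neg_of_neg_of_nonpos (mul_exp_mul_sub_exp_mul_neg hL zero_lt_one)
        (mul_nonpos_of_nonneg_of_nonpos (by linarith) (mul_exp_mul_sub_exp_mul_nonpos _ hs))

theorem convexOn_log_sub_add_mul_rpow_div {ρ η N : ℝ} (hη : 0 < η) (hη1 : η ≠ 1)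
    (hρη : ρ < η) (hρ : ρ < 1) (hN : 0 ≤ N) :
    ConvexOn ℝ (Icc 0 N) fun t =>
      log ((ρ - η + (1 - ρ) * η ^ (-t - N)) / (ρ - η + (1 - ρ) * η ^ (t - N))) := by
  have hp : ∀ s, ρ - η + (1 - ρ) * η ^ (s - N) =
      ρ - η + (1 - ρ) * η ^ (-N) * exp (log η * s) := fun s => by
    rw [rpow_def_of_pos hη, rpow_def_of_pos hη, mul_assoc, ← exp_add]
    ring_nf
  simp only [hp]
  set A := ρ - η
  set B := (1 - ρ) * η ^ (-N)
  have hneg : ∀ t ≤ N, log η * (A + B * exp (log η * t)) < 0 :=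
    fun t ht => hp t ▸ log_mul_sub_add_mul_rpow_neg hη hη1 hρ.le (by linarith)
  refine convexOn_log_add_mul_exp_neg_div (fun t ht => right_ne_zero_of_mul (hneg t ht.2).ne) ?_
  have hA : A < 0 := sub_neg.2 hρη
  have hB : 0 < B := mul_pos (sub_pos.2 hρ) (rpow_pos_of_pos hη _)
  have h₀ := hneg 0 hN
  rw [mul_zero, exp_zero, mul_one] at h₀
  calc A * B * (A ^ 2 - B ^ 2) * log η = A * B * (A - B) * (log η * (A + B)) := by ring
    _ ≤ 0 := mul_nonpos_of_nonneg_of_nonpos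
        (mul_nonneg_of_nonpos_of_nonpos (mul_neg_of_neg_of_pos hA hB).le (by linarith)) h₀.le

theorem psi_convex_general
    (ρ η N : ℝ) (hρ : ρ ∈ Set.Ioo (-1 : ℝ) 0) (hη : 0 < η) (hN : 0 < N)
    (ψ : ℝ → ℝ)
    (hψ1 : η = 1 → ∀ t, ψ t =
      Real.log ((1 + (1 - ρ) * (N + t)) / (1 + (1 - ρ) * (N - t))))
    (hψ2 : η ≠ 1 → ∀ t, ψ t =
      Real.log ((-(η - ρ) + (1 - ρ) * η ^ (-t - N)) / (-(η - ρ) + (1 - ρ) * η ^ (t - N)))) :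
    ConvexOn ℝ (Set.Icc 0 N) ψ := by
  have hρ1 : ρ < 1 := by linarith [hρ.2]
  rcases eq_or_ne η 1 with rfl | hη1
  · have hψ : ψ = fun t =>
        log ((1 + (1 - ρ) * N + (1 - ρ) * t) / (1 + (1 - ρ) * N - (1 - ρ) * t)) := by
      funext t
      rw [hψ1 rfl]
      ring_nf
    rw [hψ]
    exact convexOn_log_add_mul_div_sub_mul (by linarith) (by linarith)
  · have hψ : ψ = fun t =>
        log ((ρ - η + (1 - ρ) * η ^ (-t - N)) / (ρ - η + (1 - ρ) * η ^ (t - N))) := by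
      funext t
      rw [hψ2 hη1, neg_sub]
    rw [hψ]
    exact convexOn_log_sub_add_mul_rpow_div hη hη1 (by linarith [hρ.2]) hρ1 hN.le

/-- **Proposition 2.** Convexity of the function `ψ` on `[0, N]`. -/
theorem psi_convex
    (ρ η N : ℝ) (hρ : ρ ∈ Set.Ioo (-1 : ℝ) 0) (hη : 0 < η) (hN : 0 < N)
    (ψ : ℝ → ℝ)
    (hψ1 : η = 1 → ∀ t, ψ t =
      Real.log ((1 + (1 - ρ) * (N + t)) / (1 + (1 - ρ) * (N - t))))
    (hψ2 : η ≠ 1 → ∀ t, ψ t =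
      Real.log ((-(η - ρ) + (1 - ρ) * η ^ (-t - N)) / (-(η - ρ) + (1 - ρ) * η ^ (t - N))))
    (hwd : η ≠ 1 → ∀ t ∈ Set.Icc (0 : ℝ) N,
      0 < (-(η - ρ) + (1 - ρ) * η ^ (-t - N)) * (-(η - ρ) + (1 - ρ) * η ^ (t - N))) :
    ConvexOn ℝ (Set.Icc 0 N) ψ :=
  psi_convex_general ρ η N hρ hη hN ψ hψ1 hψ2
end

section
/- (Proposition 4.) Let N ≥ 2 be an integer, ρ ∈ (−1, 0), and η ∈ (−ρ, ∞) with E_N(η) = E_N(ρ) (equivalently T_N(ρ, η) = 0). Then for every k with 1 ≤ k ≤ N−1, ((η − ρ)/η) · E_k(ρ) − T_k(ρ, η)/F_{N−k}(η) ≥ 0. -/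
open Finset

/-!
Substitute `a = -1/ρ > 1` and `x = 1/η ∈ (0, a)`. Then all of `E_m(ρ)`, `E_m(η)`, `F_M(η)` are geometric
sums. With `D(n) = (a + 1)(1 + x + ⋯ + x^(n-1)) - 1 - a^n` the hypothesis reads `D(2N + 1) = 0`, and the
quantity to bound equals `(a^(2k) D(M + 1) - D(2k + M + 1)) / ((a + 1)(1 + x + ⋯ + x^(M-1)))`
with `M = N - k`. Its numerator is nonnegative because of the polynomial identity
`(1 + x + ⋯ + x^(2N-1)) (a^(2k) D(M + 1) - D(2k + M + 1)) = a (a - 1) (a - x) Ξ + H D(2N + 1)`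
(`H` a polynomial), where `Ξ` is a double sum of terms that are visibly nonnegative when `0 ≤ x ≤ a` and `1 ≤ a`.
-/

section GeomIdentities

variable {R : Type*} [CommRing R]

def geomSum (n : ℕ) (x : R) : R := ∑ i ∈ range n, x ^ i

theorem geomSum_mul_sub_one (n : ℕ) (x : R) : geomSum n x * (x - 1) = x ^ n - 1 :=
  geom_sum_mul x n

theorem geomSum_add (m n : ℕ) (x : R) : geomSum (m + n) x = geomSum m x + x ^ m * geomSum n x := by
  simp only [geomSum, sum_range_add, mul_sum, pow_add]

theorem geomSum_succ (n : ℕ) (x : R) : geomSum (n + 1) x = x * geomSum n x + 1 :=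
  geom_sum_succ

/-- For odd `n = 2m + 1` this is `(a + 1) * T_m(-1/a, 1/x)` (`tPoly_two_mul_add_one`). -/
def tPoly (a x : R) (n : ℕ) : R := (a + 1) * geomSum n x - 1 - a ^ n

theorem sub_one_mul_tPoly (a x : R) (n : ℕ) :
    (x - 1) * tPoly a x n = (a + 1) * x ^ n - (x - 1) * a ^ n - (a + x) := by
  rw [tPoly]
  linear_combination (a + 1) * geomSum_mul_sub_one n x

theorem tPoly_shift_eq (a x : R) (K M : ℕ) :
    a ^ K * tPoly a x (M + 1) - tPoly a x (K + M + 1) =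
      (a + x) * (a ^ K - 1) * geomSum M x - x ^ M * tPoly a x (K + 1) := by
  have h₁ : geomSum (M + 1) x = geomSum M x + x ^ M := by simp [geomSum, sum_range_succ]
  have h₂ : geomSum (K + M + 1) x = geomSum (M + 1) x + x ^ (M + 1) * geomSum K x := by
    rw [← geomSum_add, show M + 1 + K = K + M + 1 by ring]
  simp only [tPoly]
  rw [h₂, h₁, geomSum_succ]
  linear_combination (1 - a ^ K) * geomSum_mul_sub_one M x

def crossSum (a x : R) (K M : ℕ) : R :=
  ∑ m ∈ range M, ∑ t ∈ range K, geomSum (M + t - m) x *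
    (a ^ (m + t) * x ^ m * (a ^ (2 * (K + M - 1 - m - t)) - x ^ (K + M - 1 - m - t)))

theorem sub_one_mul_crossSum_term (a x : R) {K M m t : ℕ} (hm : m < M) (ht : t < K) :
    (x - 1) * (geomSum (M + t - m) x *
      (a ^ (m + t) * x ^ m * (a ^ (2 * (K + M - 1 - m - t)) - x ^ (K + M - 1 - m - t)))) =
    a ^ (K + M) * x ^ M * ((1 ^ m * a ^ (M - 1 - m)) * (x ^ t * a ^ (K - 1 - t))) -
      x ^ (K + M) * ((a ^ m * x ^ (M - 1 - m)) * (a ^ t * 1 ^ (K - 1 - t))) -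
      a ^ (K + M) * ((x ^ m * a ^ (M - 1 - m)) * (1 ^ t * a ^ (K - 1 - t))) +
      x ^ M * ((a ^ m * 1 ^ (M - 1 - m)) * (a ^ t * x ^ (K - 1 - t))) := by
  obtain ⟨u, rfl⟩ := Nat.exists_eq_add_of_lt hm
  obtain ⟨v, rfl⟩ := Nat.exists_eq_add_of_lt ht
  have e₁ : m + u + 1 + t - m = u + 1 + t := by omega
  have e₂ : t + v + 1 + (m + u + 1) - 1 - m - t = u + v + 1 := by omega
  have e₃ : m + u + 1 - 1 - m = u := by omega
  have e₄ : t + v + 1 - 1 - t = v := by omega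
  rw [e₁, e₂, e₃, e₄]
  linear_combination (a ^ (m + t) * x ^ m * (a ^ (2 * (u + v + 1)) - x ^ (u + v + 1))) *
    geomSum_mul_sub_one (u + 1 + t) x

theorem crossSum_closed (a x : R) (K M : ℕ) :
    (a - 1) * (a - x) * ((x - 1) * crossSum a x K M) =
      x ^ M * (a ^ (K + M) + 1) * (a ^ M - 1) * (a ^ K - x ^ K) -
        (a ^ (K + M) + x ^ (K + M)) * (a ^ M - x ^ M) * (a ^ K - 1) := by
  set P₁ := ∑ m ∈ range M, 1 ^ m * a ^ (M - 1 - m)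
  set P₂ := ∑ m ∈ range M, a ^ m * x ^ (M - 1 - m)
  set P₃ := ∑ m ∈ range M, x ^ m * a ^ (M - 1 - m)
  set P₄ := ∑ m ∈ range M, a ^ m * 1 ^ (M - 1 - m)
  set Q₁ := ∑ t ∈ range K, x ^ t * a ^ (K - 1 - t)
  set Q₂ := ∑ t ∈ range K, a ^ t * 1 ^ (K - 1 - t)
  set Q₃ := ∑ t ∈ range K, 1 ^ t * a ^ (K - 1 - t)
  set Q₄ := ∑ t ∈ range K, a ^ t * x ^ (K - 1 - t)
  have h : (x - 1) * crossSum a x K M =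
      a ^ (K + M) * x ^ M * (P₁ * Q₁) - x ^ (K + M) * (P₂ * Q₂) -
        a ^ (K + M) * (P₃ * Q₃) + x ^ M * (P₄ * Q₄) := by
    simp only [P₁, P₂, P₃, P₄, Q₁, Q₂, Q₃, Q₄, crossSum, sum_mul_sum]
    simp only [mul_sum, ← sum_sub_distrib, ← sum_add_distrib]
    exact sum_congr rfl fun m hm => sum_congr rfl fun t ht =>
      sub_one_mul_crossSum_term a x (mem_range.1 hm) (mem_range.1 ht)
  rw [h]
  -- each `Pᵢ`, `Qᵢ` is a sum `∑ p ^ i * q ^ (n - 1 - i)` with closed form `geom_sum₂_mul`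
  linear_combination
    a ^ (K + M) * x ^ M * (Q₁ * (x - a) * geom_sum₂_mul 1 a M + (1 - a ^ M) * geom_sum₂_mul x a K) -
    x ^ (K + M) * (Q₂ * (a - 1) * geom_sum₂_mul a x M + (a ^ M - x ^ M) * geom_sum₂_mul a 1 K) -
    a ^ (K + M) * (Q₃ * (1 - a) * geom_sum₂_mul x a M + (x ^ M - a ^ M) * geom_sum₂_mul 1 a K) +
    x ^ M * (Q₄ * (a - x) * geom_sum₂_mul a 1 M + (a ^ M - 1) * geom_sum₂_mul a x K)

end GeomIdentities

theorem crossSum_nonneg {R : Type*} [CommRing R] [LinearOrder R] [IsStrictOrderedRing R]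
    {a x : R} (ha : 1 ≤ a) (hx : 0 ≤ x) (hxa : x ≤ a) (K M : ℕ) : 0 ≤ crossSum a x K M := by
  refine sum_nonneg fun m _ => sum_nonneg fun t _ => ?_
  refine mul_nonneg (sum_nonneg fun i _ => pow_nonneg hx i) (mul_nonneg (by positivity) ?_)
  rw [sub_nonneg]
  calc x ^ (K + M - 1 - m - t) ≤ a ^ (K + M - 1 - m - t) := pow_le_pow_left₀ hx hxa _
    _ ≤ a ^ (2 * (K + M - 1 - m - t)) := pow_le_pow_right₀ ha (by omega)

theorem eq_of_pow_sub_mul_eq {f g : ℝ → ℝ} (hf : Continuous f) (hg : Continuous g) (c : ℝ) (n : ℕ)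
    (h : ∀ x, (x - c) ^ n * f x = (x - c) ^ n * g x) : ∀ x, f x = g x :=
  congrFun <| Continuous.ext_on (dense_compl_singleton c) hf hg fun x hx =>
    mul_left_cancel₀ (pow_ne_zero n (sub_ne_zero.2 hx)) (h x)

/-- Both sides are polynomials in `x`; after multiplying by `(x - 1) ^ 2` every geometric sum
has a closed form, so the identity follows off `x = 1` and then by continuity. -/
theorem geomSum_mul_tPoly_shift (a x : ℝ) (K M : ℕ) :
    geomSum (K + 2 * M) x * (a ^ K * tPoly a x (M + 1) - tPoly a x (K + M + 1)) =
      a * (a - 1) * (a - x) * crossSum a x K M +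
        (a ^ K * geomSum M x - geomSum (K + M) x) * tPoly a x (K + 2 * M + 1) := by
  revert x
  refine eq_of_pow_sub_mul_eq ?_ ?_ 1 2 fun y => ?_
  · simp only [geomSum, tPoly]; fun_prop
  · simp only [geomSum, tPoly, crossSum]; fun_prop
  · linear_combination
      ((y - 1) * (a ^ K * tPoly a y (M + 1) - tPoly a y (K + M + 1))) *
        geomSum_mul_sub_one (K + 2 * M) y +
      (y ^ (K + 2 * M) - 1) *
        (a ^ K * sub_one_mul_tPoly a y (M + 1) - sub_one_mul_tPoly a y (K + M + 1)) -
      (a * (y - 1)) * crossSum_closed a y K M -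
      ((y - 1) * tPoly a y (K + 2 * M + 1)) *
        (a ^ K * geomSum_mul_sub_one M y - geomSum_mul_sub_one (K + M) y) -
      (a ^ K * (y ^ M - 1) - (y ^ (K + M) - 1)) * sub_one_mul_tPoly a y (K + 2 * M + 1)

theorem tPoly_shift_nonneg {a x : ℝ} (ha : 1 ≤ a) (hx : 0 ≤ x) (hxa : x ≤ a) {K M : ℕ}
    (hKM : K + 2 * M ≠ 0) (h : tPoly a x (K + 2 * M + 1) = 0) :
    0 ≤ a ^ K * tPoly a x (M + 1) - tPoly a x (K + M + 1) := by
  have hS : 0 < geomSum (K + 2 * M) x := geom_sum_pos hx hKM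
  have key := geomSum_mul_tPoly_shift a x K M
  rw [h, mul_zero, add_zero] at key
  refine nonneg_of_mul_nonneg_right (key ▸ ?_) hS
  exact mul_nonneg (mul_nonneg (mul_nonneg (by linarith) (by linarith)) (by linarith))
    (crossSum_nonneg ha hx hxa K M)

theorem Efun_inv (m : ℕ) (x : ℝ) : Efun m x⁻¹ = Ffun (2 * m) x := by
  simp [Efun, Ffun]

theorem Ffun_eq_mul_geomSum (n : ℕ) (x : ℝ) : Ffun n x = x * geomSum n x := by
  rw [Ffun, geomSum, mul_sum, ← Ico_add_one_right_eq_Icc, sum_Ico_eq_sum_range]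
  simp [pow_succ', add_comm]

theorem Ffun_inv_mul_pow {x : ℝ} (hx : x ≠ 0) (n : ℕ) : Ffun n x⁻¹ * x ^ n = geomSum n x := by
  simp only [Ffun_eq_mul_geomSum, geomSum, mul_sum, sum_mul]
  conv_rhs => rw [← sum_range_reflect]
  refine sum_congr rfl fun i hi => ?_
  obtain ⟨j, rfl⟩ : ∃ j, n = j + i + 1 := ⟨n - 1 - i, by have := mem_range.1 hi; omega⟩
  rw [show j + i + 1 - 1 - i = j by omega, inv_pow]
  field_simp
  ring

theorem Ffun_two_mul_neg (a : ℝ) (m : ℕ) : (a + 1) * Ffun (2 * m) (-a) = a ^ (2 * m + 1) - a := by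
  rw [Ffun_eq_mul_geomSum]
  linear_combination a * geomSum_mul_sub_one (2 * m) (-a) + a * Even.neg_pow ⟨m, two_mul m⟩ a

theorem tPoly_two_mul_add_one (a x : ℝ) (m : ℕ) :
    tPoly a x (2 * m + 1) = (a + 1) * (Ffun (2 * m) x - Ffun (2 * m) (-a)) := by
  rw [tPoly, geomSum_succ, mul_sub, Ffun_two_mul_neg, Ffun_eq_mul_geomSum]
  ring

theorem beta_eq_tPoly_shift_div {a x : ℝ} (ha : a ≠ 0) (ha₁ : a + 1 ≠ 0) (hx : x ≠ 0) (k M : ℕ)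
    (hS : geomSum M x ≠ 0) :
    (x⁻¹ - (-a)⁻¹) / x⁻¹ * Ffun (2 * k) (-a) - (Ffun (2 * k) x - Ffun (2 * k) (-a)) / Ffun M x⁻¹ =
      (a ^ (2 * k) * tPoly a x (M + 1) - tPoly a x (2 * k + M + 1)) / ((a + 1) * geomSum M x) := by
  have hF : Ffun M x⁻¹ = geomSum M x / x ^ M := eq_div_of_mul_eq (by positivity) (Ffun_inv_mul_pow hx M)
  have hQ := Ffun_two_mul_neg a k
  rw [tPoly_shift_eq, tPoly_two_mul_add_one, hF]
  field_simp
  linear_combination (x + a) * geomSum M x * hQ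

theorem beta_nonneg_general
    (N : ℕ)
    (ρ η : ℝ) (hρ : ρ ∈ Set.Ioo (-1 : ℝ) 0) (hη : -ρ < η)
    (hopt : Efun N η = Efun N ρ) :
    ∀ k, 1 ≤ k → k ≤ N - 1 →
      0 ≤ (η - ρ) / η * Efun k ρ - Tfun k ρ η / Ffun (N - k) η := by
  intro k hk hkN
  obtain ⟨hρ₁, hρ₀⟩ := hρ
  obtain ⟨a, rfl⟩ : ∃ a, ρ = (-a)⁻¹ := ⟨-ρ⁻¹, by simp⟩
  obtain ⟨x, rfl⟩ : ∃ x, η = x⁻¹ := ⟨η⁻¹, by simp⟩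
  obtain ⟨M, rfl⟩ : ∃ M, N = k + M := ⟨N - k, by omega⟩
  rw [inv_neg] at hρ₁ hρ₀ hη
  have ha₀ : 0 < a := inv_pos.1 (by linarith)
  have ha : 1 < a := (inv_lt_one₀ ha₀).1 (by linarith)
  have hx : 0 < x := inv_pos.1 (by linarith)
  have hxa : x < a := (inv_lt_inv₀ ha₀ hx).1 (by linarith)
  simp only [Tfun, Efun_inv] at hopt ⊢
  have hΔ : tPoly a x (2 * k + 2 * M + 1) = 0 := by
    rw [show 2 * k + 2 * M = 2 * (k + M) by ring, tPoly_two_mul_add_one, hopt, sub_self, mul_zero]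
  have hS : 0 < geomSum M x := geom_sum_pos hx.le (by omega)
  rw [Nat.add_sub_cancel_left, beta_eq_tPoly_shift_div ha₀.ne' (by positivity) hx.ne' k M hS.ne']
  exact div_nonneg (tPoly_shift_nonneg ha.le hx.le hxa.le (by omega) hΔ) (by positivity)

/-- **Proposition 4.** If `ρ ∈ (-1,0)`, `η > -ρ` and `T_N(ρ,η) = 0`, then
`((η-ρ)/η)·E_k(ρ) - T_k(ρ,η)/F_{N-k}(η) ≥ 0` for `1 ≤ k ≤ N-1`. -/
theorem beta_nonneg
    (N : ℕ) (hN : 2 ≤ N)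
    (ρ η : ℝ) (hρ : ρ ∈ Set.Ioo (-1 : ℝ) 0) (hη : -ρ < η)
    (hopt : Efun N η = Efun N ρ) :
    ∀ k, 1 ≤ k → k ≤ N - 1 →
      0 ≤ (η - ρ) / η * Efun k ρ - Tfun k ρ η / Ffun (N - k) η :=
  beta_nonneg_general N ρ η hρ hη hopt
end

section
/- Let N ≥ 2 be an integer, ρ ∈ (−1, 0), and η ∈ (−ρ, ∞) with E_N(η) = E_N(ρ). Then −ρ E_N(ρ) − (ηρ/(η − ρ)) · ( −T_{N−1}(ρ, η)/F_1(η) − (1/ρ)( T_{N−1}(ρ, η)/F_1(η) − T_{N−2}(ρ, η)/F_2(η) ) ) ≥ 0, where for N = 2 the term T_0(ρ, η) is interpreted as 0. (This quantity is the multiplier λ_{N,N−1} of (15).) -/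
/-!
Put `U = η^(-2N)` and `V = ρ^(-2N)`; since `|ρ| < η`, `0 < U < V`. The geometric sum gives
`(x - 1) E_N(x) = 1 - x^(-2N)`, so the optimality condition `E_N(η) = E_N(ρ)` forces
`E_N(ρ) = (V - U)/(η - ρ)`, and stripping the top two (resp. four) terms of `E_N` gives
`T_{N-1} = (ρ + 1)V - (η + 1)U` and `T_{N-2} = (ρ + 1)(1 + ρ²)V - (η + 1)(1 + η²)U`.
Substituting, the multiplier equals
`(U (η - ρ)(η² + ρ²) + (V - U)(η (ρ² + ρ + 1) - ρ³)) / ((η - ρ)(1 + η))`,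
a quotient of nonnegative quantities.
-/

open Finset

section Efun

variable {x : ℝ}

lemma Efun_succ (hx : x ≠ 0) (k : ℕ) :
    Efun (k + 1) x = Efun k x + (x + 1) / x ^ (2 * (k + 1)) := by
  unfold Efun
  rw [show 2 * (k + 1) = 2 * k + 1 + 1 by ring, sum_Icc_succ_top (by omega),
    sum_Icc_succ_top (by omega), zpow_neg, zpow_neg, zpow_natCast, zpow_natCast]
  field_simp
  ring

lemma sub_one_mul_Efun (hx : x ≠ 0) (k : ℕ) :
    (x - 1) * Efun k x = 1 - 1 / x ^ (2 * k) := by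
  induction k with
  | zero => simp [Efun]
  | succ k ih =>
    rw [Efun_succ hx, mul_add, ih]
    field_simp
    ring

lemma Efun_succ_eq_sub (hx : x ≠ 0) (m : ℕ) :
    Efun (m + 1) x = Efun (m + 2) x - (x + 1) / x ^ (2 * (m + 2)) := by
  rw [Efun_succ hx (m + 1)]
  ring

lemma Efun_eq_sub (hx : x ≠ 0) (m : ℕ) :
    Efun m x = Efun (m + 2) x - (x + 1) * (1 + x ^ 2) / x ^ (2 * (m + 2)) := by
  have hstep := Efun_succ hx m
  rw [Efun_succ_eq_sub hx] at hstep
  have hsplit : (x + 1) * (1 + x ^ 2) / x ^ (2 * (m + 2)) =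
      (x + 1) / x ^ (2 * (m + 2)) + (x + 1) / x ^ (2 * (m + 1)) := by
    rw [show 2 * (m + 2) = 2 * (m + 1) + 2 by ring, pow_add]
    field_simp
  linear_combination hsplit - hstep

end Efun

lemma Ffun_one (x : ℝ) : Ffun 1 x = x := by
  simp [Ffun]

lemma Ffun_two (x : ℝ) : Ffun 2 x = x + x ^ 2 := by
  simp [Ffun, sum_Icc_succ_top]

lemma one_div_pow_lt_one_div_pow {ρ η : ℝ} (hρ : ρ < 0) (hη : -ρ < η) {k : ℕ} (hk : k ≠ 0) :
    1 / η ^ (2 * k) < 1 / ρ ^ (2 * k) := by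
  have hsq : ρ ^ 2 < η ^ 2 := by nlinarith
  rw [pow_mul, pow_mul]
  exact one_div_lt_one_div_of_lt (pow_pos (by nlinarith) k)
    (pow_lt_pow_left₀ hsq (by positivity) hk)

lemma multiplier_nonneg {ρ η U V : ℝ} (hρ : ρ < 0) (hη : -ρ < η) (hU : 0 ≤ U) (hUV : U ≤ V) :
    0 ≤ -ρ * ((V - U) / (η - ρ)) - (η * ρ / (η - ρ)) *
      (-(((ρ + 1) * V - (η + 1) * U) / η) -
        (1 / ρ) * (((ρ + 1) * V - (η + 1) * U) / η -
          ((ρ + 1) * (1 + ρ ^ 2) * V - (η + 1) * (1 + η ^ 2) * U) / (η + η ^ 2))) := by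
  have hη0 : 0 < η := by linarith
  have hηρ : 0 < η - ρ := by linarith
  have hρ0 : ρ ≠ 0 := hρ.ne
  have hF : η + η ^ 2 ≠ 0 := by positivity
  have closed_form : -ρ * ((V - U) / (η - ρ)) - (η * ρ / (η - ρ)) *
      (-(((ρ + 1) * V - (η + 1) * U) / η) -
        (1 / ρ) * (((ρ + 1) * V - (η + 1) * U) / η -
          ((ρ + 1) * (1 + ρ ^ 2) * V - (η + 1) * (1 + η ^ 2) * U) / (η + η ^ 2))) =
      (U * ((η - ρ) * (η ^ 2 + ρ ^ 2)) + (V - U) * (η * (ρ ^ 2 + ρ + 1) - ρ ^ 3)) /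
        ((η - ρ) * (1 + η)) := by
    field_simp
    ring
  rw [closed_form]
  have hquad : 0 < ρ ^ 2 + ρ + 1 := by nlinarith [sq_nonneg (2 * ρ + 1)]
  have hcubic : 0 ≤ η * (ρ ^ 2 + ρ + 1) - ρ ^ 3 := by nlinarith [mul_pos hη0 hquad, sq_nonneg ρ]
  have hVU : 0 ≤ V - U := by linarith
  positivity

/-- Non-negativity of the multiplier `λ_{N,N-1}` of (15). -/
theorem lambda_N_Nsub1_nonneg
    (N : ℕ) (hN : 2 ≤ N)
    (ρ η : ℝ) (hρ : ρ ∈ Set.Ioo (-1 : ℝ) 0) (hη : -ρ < η)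
    (hopt : Efun N η = Efun N ρ) :
    0 ≤ -ρ * Efun N ρ - (η * ρ / (η - ρ)) *
      (-(Tfun (N - 1) ρ η / Ffun 1 η) -
        (1 / ρ) * (Tfun (N - 1) ρ η / Ffun 1 η - Tfun (N - 2) ρ η / Ffun 2 η)) := by
  obtain ⟨m, rfl⟩ : ∃ m, N = m + 2 := ⟨N - 2, by omega⟩
  have hρ0 : ρ ≠ 0 := hρ.2.ne
  have hη0 : 0 < η := by linarith [hρ.2]
  set U := 1 / η ^ (2 * (m + 2))
  set V := 1 / ρ ^ (2 * (m + 2))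
  have hE : Efun (m + 2) ρ = (V - U) / (η - ρ) := by
    have hgη := sub_one_mul_Efun hη0.ne' (m + 2)
    have hgρ := sub_one_mul_Efun hρ0 (m + 2)
    rw [hopt] at hgη
    rw [eq_div_iff (by linarith [hρ.2])]
    linear_combination hgη - hgρ
  have hT1 : Tfun (m + 2 - 1) ρ η = (ρ + 1) * V - (η + 1) * U := by
    rw [Tfun, show m + 2 - 1 = m + 1 by omega, Efun_succ_eq_sub hη0.ne', Efun_succ_eq_sub hρ0,
      hopt]
    ring
  have hT2 : Tfun (m + 2 - 2) ρ η = (ρ + 1) * (1 + ρ ^ 2) * V - (η + 1) * (1 + η ^ 2) * U := by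
    rw [Tfun, show m + 2 - 2 = m by omega, Efun_eq_sub hη0.ne', Efun_eq_sub hρ0, hopt]
    ring
  rw [hE, hT1, hT2, Ffun_one, Ffun_two]
  exact multiplier_nonneg hρ.2 hη (by positivity) (one_div_pow_lt_one_div_pow hρ.2 hη (by omega)).le
end

section
/- Let N ≥ 1 be an integer, ρ ∈ (−1, 0), and η ∈ (−ρ, ∞) with E_N(η) = E_N(ρ). Define δ_1 = T_1(ρ, η) and δ_k = T_k(ρ, η) − (F_{N−k}(η)/F_{N−k+1}(η))² · T_{k−1}(ρ, η) for 2 ≤ k ≤ N, where F_0(η) = 0. Then δ_k ≥ 0 for every k = 1, …, N. -/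
open Finset

/-!
Write `u = η⁻¹` and `v = ρ⁻¹`, so that `u > 0`, `v < -1` and `u² < v²`. Then
`E_k(η) = u(1+u) ∑_{i<k} u^{2i}` and `E_k(ρ) = v(1+v) ∑_{i<k} v^{2i}` with positive prefactors, and
the hypothesis `E_N(η) = E_N(ρ)` turns `T_k` into `A_k - B_k`, where `A_k = E_N(ρ) - E_k(ρ)` and
`B_k = E_N(η) - E_k(η)` are prefactor times the geometric tails `∑_{k≤i<N} v^{2i}` and
`∑_{k≤i<N} u^{2i}`. The ratio of consecutive tails increases with the base, so
`A_{k+1}/A_k ≥ B_{k+1}/B_k`; starting from `A_0 = B_0` this gives `A_k ≥ B_k`. Reversing the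
geometric sums, `(F_{N-k}(η)/F_{N-k+1}(η))² ≤ B_k/B_{k-1}`, so
`δ_k B_{k-1} ≥ A_k B_{k-1} - A_{k-1} B_k ≥ 0`.
-/

lemma geom_sum_two_mul (x : ℝ) (n : ℕ) :
    ∑ i ∈ range (2 * n), x ^ i = (1 + x) * ∑ i ∈ range n, (x ^ 2) ^ i := by
  induction n with
  | zero => simp
  | succ n ih =>
    rw [Nat.mul_succ, sum_range_succ, sum_range_succ, ih, sum_range_succ]
    ring

lemma geom_sum_Ico_eq_pow_mul (x : ℝ) (k n : ℕ) :
    ∑ i ∈ Ico k n, x ^ i = x ^ k * ∑ i ∈ range (n - k), x ^ i := by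
  rw [sum_Ico_eq_sum_range, mul_sum]
  simp only [pow_add]

lemma pow_mul_pow_le_pow_mul_pow {x y : ℝ} (hx : 0 ≤ x) (hxy : x ≤ y) {k i : ℕ} (hki : k ≤ i) :
    y ^ k * x ^ i ≤ x ^ k * y ^ i := by
  obtain ⟨d, rfl⟩ := Nat.exists_eq_add_of_le hki
  have hy : 0 ≤ y := hx.trans hxy
  rw [pow_add, pow_add, mul_left_comm]
  gcongr

lemma geom_sum_Ico_ratio_mono {x y : ℝ} (hx : 0 ≤ x) (hxy : x ≤ y) {k n : ℕ} (h : k < n) :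
    (∑ i ∈ Ico k n, y ^ i) * ∑ i ∈ Ico (k + 1) n, x ^ i
      ≤ (∑ i ∈ Ico (k + 1) n, y ^ i) * ∑ i ∈ Ico k n, x ^ i := by
  have hcross : y ^ k * ∑ i ∈ Ico (k + 1) n, x ^ i ≤ x ^ k * ∑ i ∈ Ico (k + 1) n, y ^ i := by
    rw [mul_sum, mul_sum]
    exact sum_le_sum fun i hi =>
      pow_mul_pow_le_pow_mul_pow hx hxy (Nat.le_of_succ_le (mem_Ico.1 hi).1)
  rw [sum_eq_sum_Ico_succ_bot h (fun i => y ^ i), sum_eq_sum_Ico_succ_bot h (fun i => x ^ i)]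
  linarith

lemma one_add_mul_geom_sum_sq (t : ℝ) (m : ℕ) :
    (1 + t) * ∑ i ∈ range m, (t ^ 2) ^ i = (1 + t ^ m) * ∑ i ∈ range m, t ^ i := by
  induction m with
  | zero => simp
  | succ m ih =>
    rw [sum_range_succ, sum_range_succ]
    linear_combination ih - t ^ m * geom_sum_mul t m

lemma sq_geom_sum_mul_geom_sum_sq_le {t : ℝ} (ht : 0 ≤ t) (m : ℕ) :
    (∑ i ∈ range m, t ^ i) ^ 2 * ∑ i ∈ range (m + 1), (t ^ 2) ^ i
      ≤ (∑ i ∈ range (m + 1), t ^ i) ^ 2 * ∑ i ∈ range m, (t ^ 2) ^ i := by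
  set a := ∑ i ∈ range m, t ^ i
  have hb : ∑ i ∈ range (m + 1), t ^ i = a + t ^ m := sum_range_succ _ _
  have ha : 0 ≤ a := sum_nonneg fun i _ => pow_nonneg ht i
  refine le_of_mul_le_mul_left ?_ (by linarith : (0 : ℝ) < 1 + t)
  have hdiff : (1 + t) * ((∑ i ∈ range (m + 1), t ^ i) ^ 2 * ∑ i ∈ range m, (t ^ 2) ^ i)
      - (1 + t) * (a ^ 2 * ∑ i ∈ range (m + 1), (t ^ 2) ^ i) = 2 * a * (a + t ^ m) * t ^ m := by
    have h₁ := one_add_mul_geom_sum_sq t (m + 1)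
    rw [hb] at h₁ ⊢
    linear_combination (a + t ^ m) ^ 2 * one_add_mul_geom_sum_sq t m - a ^ 2 * h₁
      - a * (a + t ^ m) * t ^ m * geom_sum_mul t m
  have : 0 ≤ 2 * a * (a + t ^ m) * t ^ m := by positivity
  linarith

lemma pow_mul_geom_sum_inv {z : ℝ} (hz : z ≠ 0) (m : ℕ) :
    z ^ m * ∑ i ∈ range m, z⁻¹ ^ i = z * ∑ i ∈ range m, z ^ i := by
  induction m with
  | zero => simp
  | succ m ih =>
    have hcancel : z ^ m * z⁻¹ ^ m = 1 := by rw [← mul_pow, mul_inv_cancel₀ hz, one_pow]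
    rw [sum_range_succ, geom_sum_succ]
    linear_combination z * ih + z * hcancel

lemma le_of_ratio_le_ratio {A B : ℕ → ℝ} {N : ℕ} (h₀ : B 0 ≤ A 0) (hB : ∀ j ≤ N, 0 ≤ B j)
    (hB_pos : ∀ j < N, 0 < B j) (hratio : ∀ j < N, A j * B (j + 1) ≤ A (j + 1) * B j) :
    ∀ k ≤ N, B k ≤ A k := by
  intro k hk
  induction k with
  | zero => exact h₀
  | succ j ih =>
    have hj : j < N := hk
    refine le_of_mul_le_mul_right ?_ (hB_pos j hj)
    calc B (j + 1) * B j ≤ A j * B (j + 1) := by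
          rw [mul_comm]; exact mul_le_mul_of_nonneg_right (ih hj.le) (hB _ hk)
      _ ≤ A (j + 1) * B j := hratio j hj

lemma sub_sub_sq_mul_sub_nonneg {a a' b b' l : ℝ} (hb : 0 < b) (hba : b ≤ a)
    (hratio : a * b' ≤ a' * b) (hl : l ^ 2 * b ≤ b') : 0 ≤ a' - b' - l ^ 2 * (a - b) := by
  have : 0 ≤ (a' - b' - l ^ 2 * (a - b)) * b := by
    nlinarith [mul_nonneg (sub_nonneg.2 hl) (sub_nonneg.2 hba)]
  exact nonneg_of_mul_nonneg_left this hb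

lemma Ffun_eq_mul_geom_sum (n : ℕ) (x : ℝ) : Ffun n x = x * ∑ i ∈ range n, x ^ i := by
  rw [Ffun, mul_sum, ← Finset.Ico_add_one_right_eq_Icc, sum_Ico_eq_sum_range]
  simp [pow_succ', add_comm]

lemma Efun_zero (x : ℝ) : Efun 0 x = 0 := by
  simp [Efun]

lemma Efun_eq_mul_geom_sum (k : ℕ) (x : ℝ) :
    Efun k x = x⁻¹ * (1 + x⁻¹) * ∑ i ∈ range k, (x⁻¹ ^ 2) ^ i := by
  have h : Efun k x = Ffun (2 * k) x⁻¹ :=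
    sum_congr rfl fun j _ => by rw [zpow_neg, zpow_natCast, inv_pow]
  rw [h, Ffun_eq_mul_geom_sum, geom_sum_two_mul, mul_assoc]

lemma Efun_sub_Efun {k N : ℕ} (hk : k ≤ N) (x : ℝ) :
    Efun N x - Efun k x = x⁻¹ * (1 + x⁻¹) * ∑ i ∈ Ico k N, (x⁻¹ ^ 2) ^ i := by
  rw [Efun_eq_mul_geom_sum, Efun_eq_mul_geom_sum, sum_Ico_eq_sub _ hk, mul_sub]

lemma Efun_sub_Efun_nonneg {x : ℝ} (hx : 0 ≤ x⁻¹ * (1 + x⁻¹)) {k N : ℕ} (hk : k ≤ N) :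
    0 ≤ Efun N x - Efun k x := by
  rw [Efun_sub_Efun hk]
  positivity

lemma Efun_sub_Efun_pos {x : ℝ} (hx : 0 < x⁻¹ * (1 + x⁻¹)) {k N : ℕ} (hk : k < N) :
    0 < Efun N x - Efun k x := by
  have : x⁻¹ ≠ 0 := left_ne_zero_of_mul hx.ne'
  rw [Efun_sub_Efun hk.le]
  exact mul_pos hx (sum_pos (fun i _ => by positivity) (nonempty_Ico.2 hk))

lemma Efun_sub_Efun_ratio_mono {x y : ℝ} (hx : 0 ≤ x⁻¹ * (1 + x⁻¹)) (hy : 0 ≤ y⁻¹ * (1 + y⁻¹))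
    (hxy : x⁻¹ ^ 2 ≤ y⁻¹ ^ 2) {k N : ℕ} (hk : k < N) :
    (Efun N y - Efun k y) * (Efun N x - Efun (k + 1) x)
      ≤ (Efun N y - Efun (k + 1) y) * (Efun N x - Efun k x) := by
  have := mul_le_mul_of_nonneg_left (geom_sum_Ico_ratio_mono (by positivity) hxy hk)
    (mul_nonneg hy hx)
  rw [Efun_sub_Efun hk.le, Efun_sub_Efun hk.le, Efun_sub_Efun hk, Efun_sub_Efun hk]
  linarith

lemma sq_div_Ffun_mul_geom_sum_inv_le {t : ℝ} (ht : 0 < t) (m : ℕ) :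
    (Ffun m t / Ffun (m + 1) t) ^ 2 * ∑ i ∈ range (m + 1), (t⁻¹ ^ 2) ^ i
      ≤ t⁻¹ ^ 2 * ∑ i ∈ range m, (t⁻¹ ^ 2) ^ i := by
  rw [inv_pow]
  have hs : t ^ 2 ≠ 0 := by positivity
  have h₀ := pow_mul_geom_sum_inv hs m
  have h₁ := pow_mul_geom_sum_inv hs (m + 1)
  rw [Ffun_eq_mul_geom_sum, Ffun_eq_mul_geom_sum, mul_div_mul_left _ _ ht.ne', div_pow,
    div_mul_eq_mul_div, div_le_iff₀ (pow_pos (geom_sum_pos ht.le m.succ_ne_zero) 2)]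
  set a := ∑ i ∈ range m, t ^ i
  set b := ∑ i ∈ range (m + 1), t ^ i
  -- multiplying by `(t²)^(m+1)` reverses the geometric sums in `t⁻²` into sums in `t²`
  refine le_of_mul_le_mul_right ?_ (by positivity : 0 < (t ^ 2) ^ (m + 1))
  calc a ^ 2 * (∑ i ∈ range (m + 1), ((t ^ 2)⁻¹) ^ i) * (t ^ 2) ^ (m + 1)
      = t ^ 2 * (a ^ 2 * ∑ i ∈ range (m + 1), (t ^ 2) ^ i) := by linear_combination a ^ 2 * h₁
    _ ≤ t ^ 2 * (b ^ 2 * ∑ i ∈ range m, (t ^ 2) ^ i) :=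
      mul_le_mul_of_nonneg_left (sq_geom_sum_mul_geom_sum_sq_le ht.le m) (sq_nonneg t)
    _ = (t ^ 2)⁻¹ * (∑ i ∈ range m, ((t ^ 2)⁻¹) ^ i) * b ^ 2 * (t ^ 2) ^ (m + 1) := by
      linear_combination (-b ^ 2) * h₀
        - b ^ 2 * (t ^ 2) ^ m * (∑ i ∈ range m, ((t ^ 2)⁻¹) ^ i) * inv_mul_cancel₀ hs

lemma sq_div_Ffun_mul_geom_sum_Ico_le {t : ℝ} (ht : 0 < t) {k n : ℕ} (h : k < n) :
    (Ffun (n - (k + 1)) t / Ffun (n - (k + 1) + 1) t) ^ 2 * ∑ i ∈ Ico k n, (t⁻¹ ^ 2) ^ i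
      ≤ ∑ i ∈ Ico (k + 1) n, (t⁻¹ ^ 2) ^ i := by
  rw [geom_sum_Ico_eq_pow_mul, geom_sum_Ico_eq_pow_mul, show n - k = n - (k + 1) + 1 by omega,
    pow_succ (t⁻¹ ^ 2) k, mul_left_comm, mul_assoc ((t⁻¹ ^ 2) ^ k)]
  exact mul_le_mul_of_nonneg_left (sq_div_Ffun_mul_geom_sum_inv_le ht _) (by positivity)

lemma sq_div_Ffun_mul_Efun_sub_Efun_le {t : ℝ} (ht : 0 < t) {k N : ℕ} (hk : k < N) :
    (Ffun (N - (k + 1)) t / Ffun (N - (k + 1) + 1) t) ^ 2 * (Efun N t - Efun k t)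
      ≤ Efun N t - Efun (k + 1) t := by
  have := mul_le_mul_of_nonneg_left (sq_div_Ffun_mul_geom_sum_Ico_le ht hk)
    (by positivity : 0 ≤ t⁻¹ * (1 + t⁻¹))
  rw [Efun_sub_Efun hk.le, Efun_sub_Efun hk]
  linarith

theorem delta_nonneg_general
    (N : ℕ)
    (ρ η : ℝ) (hρ : ρ ∈ Set.Ioo (-1 : ℝ) 0) (hη : -ρ < η)
    (hopt : Efun N η = Efun N ρ)
    (δ : ℕ → ℝ)
    (hδ1 : δ 1 = Tfun 1 ρ η)
    (hδk : ∀ k, 2 ≤ k → k ≤ N →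
      δ k = Tfun k ρ η - (Ffun (N - k) η / Ffun (N - k + 1) η) ^ 2 * Tfun (k - 1) ρ η) :
    ∀ k, 1 ≤ k → k ≤ N → 0 ≤ δ k := by
  obtain ⟨hρ₁, hρ₀⟩ := hρ
  have hη₀ : 0 < η := by linarith
  have hcη : 0 < η⁻¹ * (1 + η⁻¹) := by positivity
  have hcρ : 0 < ρ⁻¹ * (1 + ρ⁻¹) := by
    have : ρ⁻¹ < -1 := by nlinarith [mul_inv_cancel₀ hρ₀.ne]
    exact mul_pos_of_neg_of_neg (by linarith) (by linarith)
  have hsq : η⁻¹ ^ 2 ≤ ρ⁻¹ ^ 2 := by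
    rw [inv_pow, inv_pow]
    exact inv_anti₀ (by nlinarith) (by nlinarith)
  set A : ℕ → ℝ := fun k => Efun N ρ - Efun k ρ
  set B : ℕ → ℝ := fun k => Efun N η - Efun k η
  have hT : ∀ k, Tfun k ρ η = A k - B k := fun k => by
    simp only [A, B, Tfun]
    linarith
  have hB_pos : ∀ j < N, 0 < B j := fun j => Efun_sub_Efun_pos hcη
  have hratio : ∀ j < N, A j * B (j + 1) ≤ A (j + 1) * B j := fun j =>
    Efun_sub_Efun_ratio_mono hcη.le hcρ.le hsq
  have hBA : ∀ k ≤ N, B k ≤ A k :=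
    le_of_ratio_le_ratio (by simp [A, B, hopt, Efun_zero]) (fun j => Efun_sub_Efun_nonneg hcη.le)
      hB_pos hratio
  intro k hk₁ hkN
  obtain ⟨j, rfl⟩ : ∃ j, k = j + 1 := ⟨k - 1, by omega⟩
  rcases Nat.eq_zero_or_pos j with rfl | hj
  · rw [hδ1, hT]
    linarith [hBA 1 hkN]
  · rw [hδk (j + 1) (by omega) hkN, Nat.add_sub_cancel, hT, hT]
    exact sub_sub_sq_mul_sub_nonneg (hB_pos j hkN) (hBA j (by omega)) (hratio j hkN)
      (sq_div_Ffun_mul_Efun_sub_Efun_le hη₀ hkN)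

/-- Non-negativity of the coefficients `δ_k` of Proposition 5. -/
theorem delta_nonneg
    (N : ℕ) (hN : 1 ≤ N)
    (ρ η : ℝ) (hρ : ρ ∈ Set.Ioo (-1 : ℝ) 0) (hη : -ρ < η)
    (hopt : Efun N η = Efun N ρ)
    (δ : ℕ → ℝ)
    (hδ1 : δ 1 = Tfun 1 ρ η)
    (hδk : ∀ k, 2 ≤ k → k ≤ N →
      δ k = Tfun k ρ η - (Ffun (N - k) η / Ffun (N - k + 1) η) ^ 2 * Tfun (k - 1) ρ η) :
    ∀ k, 1 ≤ k → k ≤ N → 0 ≤ δ k :=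
  delta_nonneg_general N ρ η hρ hη hopt δ hδ1 hδk
end

section
/- Let N ≥ 3 be an integer, ρ ∈ (−1, 0), and η ∈ [1, ∞) with E_N(η) = E_N(ρ). Then for every k with 1 ≤ k ≤ N−2, (N − k) · T_{k+1}(ρ, η) ≥ (N − k − 1) · T_k(ρ, η). -/
open Finset

/-!
The increment `T_{m+1} - T_m` is `η^{-(2m+1)} + η^{-(2m+2)}`, decreasing in `m` since `η ≥ 1`,
minus `(1 + ρ) ρ^{-2(m+1)}`, increasing in `m` since `|ρ| ≤ 1`. So `k ↦ T_k` is concave, and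
concavity together with `T_N = 0` gives `-T_k ≤ (N - k)(T_{k+1} - T_k)`, which rearranges
to the claim.
-/

theorem sub_le_nsmul_succ_sub_of_antitone {α : Type*} [AddCommGroup α] [PartialOrder α]
    [IsOrderedAddMonoid α] {f : ℕ → α} (hf : Antitone fun m ↦ f (m + 1) - f m) (k n : ℕ) :
    f (k + n) - f k ≤ n • (f (k + 1) - f k) := by
  induction n with
  | zero => simp
  | succ n ih =>
    calc f (k + (n + 1)) - f k = (f (k + n) - f k) + (f (k + n + 1) - f (k + n)) := by
          rw [← add_assoc]; abel
      _ ≤ n • (f (k + 1) - f k) + (f (k + 1) - f k) := add_le_add ih (hf (by omega))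
      _ = (n + 1) • (f (k + 1) - f k) := by rw [succ_nsmul]

theorem Efun_succ_sub (m : ℕ) (x : ℝ) :
    Efun (m + 1) x - Efun m x = x⁻¹ ^ (2 * m + 1) + x⁻¹ ^ (2 * m + 2) := by
  rw [Efun, Efun, show 2 * (m + 1) = 2 * m + 1 + 1 by ring,
    sum_Icc_succ_top (by omega), sum_Icc_succ_top (by omega)]
  simp only [zpow_neg, zpow_natCast, inv_pow]
  ring

theorem antitone_Efun_succ_sub {x : ℝ} (hx : 1 ≤ x) :
    Antitone fun m ↦ Efun (m + 1) x - Efun m x := by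
  have hx0 : 0 ≤ x⁻¹ := by positivity
  have hx1 : x⁻¹ ≤ 1 := inv_le_one_of_one_le₀ hx
  intro i j hij
  simp only [Efun_succ_sub]
  exact add_le_add (pow_le_pow_of_le_one hx0 hx1 (by omega))
    (pow_le_pow_of_le_one hx0 hx1 (by omega))

theorem Efun_succ_sub_eq_mul {x : ℝ} (hx : x ≠ 0) (m : ℕ) :
    Efun (m + 1) x - Efun m x = (1 + x) * (x ^ 2)⁻¹ ^ (m + 1) := by
  rw [Efun_succ_sub, ← inv_pow, ← pow_mul, mul_add_one, pow_succ x⁻¹ (2 * m + 1)]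
  linear_combination (-x⁻¹ ^ (2 * m + 1)) * mul_inv_cancel₀ hx

theorem monotone_Efun_succ_sub {x : ℝ} (hx : x ≠ 0) (hx1 : |x| ≤ 1) :
    Monotone fun m ↦ Efun (m + 1) x - Efun m x := by
  have hsq : 1 ≤ (x ^ 2)⁻¹ :=
    (one_le_inv₀ (by positivity)).mpr ((sq_le_one_iff_abs_le_one x).mpr hx1)
  have hpos : 0 ≤ 1 + x := by linarith [neg_abs_le x]
  intro i j hij
  simp only [Efun_succ_sub_eq_mul hx]
  gcongr

theorem antitone_Tfun_succ_sub {ρ η : ℝ} (hρ : ρ ≠ 0) (hρ1 : |ρ| ≤ 1) (hη : 1 ≤ η) :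
    Antitone fun m ↦ Tfun (m + 1) ρ η - Tfun m ρ η := by
  intro i j hij
  have hηij := antitone_Efun_succ_sub hη hij
  have hρij := monotone_Efun_succ_sub hρ hρ1 hij
  simp only [Tfun] at hηij hρij ⊢
  linarith

theorem case_eta_ge_one_general
    (N : ℕ)
    (ρ η : ℝ) (hρ : ρ ∈ Set.Ioo (-1 : ℝ) 0) (hη : 1 ≤ η)
    (hopt : Efun N η = Efun N ρ) :
    ∀ k, 1 ≤ k → k ≤ N - 2 →
      ((N : ℝ) - k) * Tfun (k + 1) ρ η ≥ ((N : ℝ) - k - 1) * Tfun k ρ η := by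
  intro k _ hk
  have hanti := antitone_Tfun_succ_sub hρ.2.ne (abs_le.mpr ⟨hρ.1.le, by linarith [hρ.2]⟩) hη
  have hconcave := sub_le_nsmul_succ_sub_of_antitone (f := fun m ↦ Tfun m ρ η) hanti k (N - k)
  rw [Nat.add_sub_cancel' (by omega), nsmul_eq_mul, Nat.cast_sub (by omega)] at hconcave
  have hTN : Tfun N ρ η = 0 := sub_eq_zero.mpr hopt
  rw [hTN] at hconcave
  linarith

/-- Case `η ∈ [1, ∞)` of the proof of Proposition 3:
`(N-k)·T_{k+1}(ρ,η) ≥ (N-k-1)·T_k(ρ,η)`. -/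
theorem case_eta_ge_one
    (N : ℕ) (hN : 3 ≤ N)
    (ρ η : ℝ) (hρ : ρ ∈ Set.Ioo (-1 : ℝ) 0) (hη : 1 ≤ η)
    (hopt : Efun N η = Efun N ρ) :
    ∀ k, 1 ≤ k → k ≤ N - 2 →
      ((N : ℝ) - k) * Tfun (k + 1) ρ η ≥ ((N : ℝ) - k - 1) * Tfun k ρ η :=
  case_eta_ge_one_general N ρ η hρ hη hopt
end

section
/- (Interpolation inequality for μ ∈ (−∞, L).) Let d ≥ 1, L > 0, and μ < L (μ may be negative). If f : ℝ^d → ℝ is differentiable, L-smooth and μ-strongly convex, then for all p, q ∈ ℝ^d: 0 ≥ f(p) − f(q) + ⟨∇f(p), q − p⟩ + (1/(2L))‖∇f(p) − ∇f(q)‖² + (μL/(2(L − μ)))‖p − q − (1/L)(∇f(p) − ∇f(q))‖². -/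
open RealInnerProductSpace

set_option maxHeartbeats 1000000 in
theorem aux_identity {E : Type*} [NormedAddCommGroup E] [InnerProductSpace ℝ E]
    (L μ : ℝ) (hL : 0 < L) (hμL : μ < L)
    (p q a b : E) :
    ⟪a, q - p⟫ + (1 / (2 * L)) * ‖a - b‖ ^ 2 +
      (μ * L / (2 * (L - μ))) * ‖p - q - (1 / L) • (a - b)‖ ^ 2 =
    (⟪a, (q - ((L - μ)⁻¹) • ((b - a) - μ • (q - p))) - p⟫
      + (μ / 2) * ‖p - (q - ((L - μ)⁻¹) • ((b - a) - μ • (q - p)))‖ ^ 2)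
    - (⟪b, (q - ((L - μ)⁻¹) • ((b - a) - μ • (q - p))) - q⟫
      + (L / 2) * ‖q - (q - ((L - μ)⁻¹) • ((b - a) - μ • (q - p)))‖ ^ 2) := by
  have hL' : (0:ℝ) < L - μ := by linarith
  have c1 := real_inner_comm p q
  have c2 := real_inner_comm a p
  have c3 := real_inner_comm a q
  have c4 := real_inner_comm b p
  have c5 := real_inner_comm b q
  have c6 := real_inner_comm a b
  simp only [← real_inner_self_eq_norm_sq, inner_sub_left, inner_sub_right,
    real_inner_smul_left, real_inner_smul_right, c1, c2, c3, c4, c5, c6]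
  field_simp
  ring

/-- Interpolation inequality (6) for `μ ∈ (-∞, L)`: if `f` is `L`-smooth and
`μ`-strongly convex (with `μ` possibly negative), then for all `p, q`,
`0 ≥ f(p) - f(q) + ⟨∇f(p), q - p⟩ + (1/(2L))‖∇f(p) - ∇f(q)‖²
   + (μL/(2(L-μ)))‖p - q - (1/L)(∇f(p) - ∇f(q))‖²`. -/
theorem interpolation_inequality
    (d : ℕ) (hd : 1 ≤ d)
    (L μ : ℝ) (hL : 0 < L) (hμL : μ < L)
    (f : EuclideanSpace ℝ (Fin d) → ℝ)
    (f' : EuclideanSpace ℝ (Fin d) → EuclideanSpace ℝ (Fin d))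
    (hgrad : ∀ x, HasGradientAt f (f' x) x)
    (hsmooth : ∀ p q, 0 ≤ f p - f q + ⟪f' p, q - p⟫ + (L / 2) * ‖p - q‖ ^ 2)
    (hsc : ∀ p q, 0 ≥ f p - f q + ⟪f' p, q - p⟫ + (μ / 2) * ‖p - q‖ ^ 2)
    (p q : EuclideanSpace ℝ (Fin d)) :
    0 ≥ f p - f q + ⟪f' p, q - p⟫ + (1 / (2 * L)) * ‖f' p - f' q‖ ^ 2 +
      (μ * L / (2 * (L - μ))) * ‖p - q - (1 / L) • (f' p - f' q)‖ ^ 2 := by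
  set x : EuclideanSpace ℝ (Fin d) :=
    q - ((L - μ)⁻¹) • ((f' q - f' p) - μ • (q - p)) with hx
  have h1 := hsc p x
  have h2 := hsmooth q x
  have E := aux_identity L μ hL hμL p q (f' p) (f' q)
  rw [← hx] at E
  linarith
end

section
/- (Monotonicity of the interpolation inequality in μ and L.) Let d ≥ 1, p, q, g_p, g_q ∈ ℝ^d, and f_p, f_q ∈ ℝ. For μ < L with L > 0, define Q(μ, L) = f_p − f_q + ⟨g_p, q − p⟩ + (1/(2L))‖g_p − g_q‖² + (μL/(2(L − μ)))‖p − q − (1/L)(g_p − g_q)‖². Then for all μ' ≤ μ < L ≤ L' with L' > 0, Q(μ', L') ≤ Q(μ, L). In particular, the inequality Q(μ, L) ≤ 0 becomes weaker as L increases or μ decreases. -/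
open RealInnerProductSpace

private lemma interp_arith (A B P μ L μ' L' : ℝ) (hμ'μ : μ' ≤ μ) (hμL : μ < L)
    (hLL' : L ≤ L') (hL : 0 < L) (hL' : 0 < L')
    (h1 : 0 ≤ A - 2*L*P + L^2*B) (h2 : 0 ≤ A - 2*μ'*P + μ'^2*B) :
    (1/(2*L'))*A + (μ'*L'/(2*(L'-μ')))*(B - (2/L')*P + (1/L')^2*A)
    ≤ (1/(2*L))*A + (μ*L/(2*(L-μ)))*(B - (2/L)*P + (1/L)^2*A) := by
  have hLμ : 0 < L - μ := sub_pos.2 hμL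
  have hLμ' : 0 < L - μ' := sub_pos.2 (lt_of_le_of_lt hμ'μ hμL)
  have hL'μ' : 0 < L' - μ' := lt_of_lt_of_le hLμ' (by linarith)
  have id1 : (1/(2*L'))*A + (μ'*L'/(2*(L'-μ')))*(B - (2/L')*P + (1/L')^2*A)
      = (A - 2*μ'*P + μ'^2*B)/(2*(L'-μ')) + μ'*B/2 := by
    field_simp
    ring
  have id2 : (1/(2*L))*A + (μ*L/(2*(L-μ)))*(B - (2/L)*P + (1/L)^2*A)
      = (A - 2*μ*P + μ^2*B)/(2*(L-μ)) + μ*B/2 := by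
    field_simp
    ring
  rw [id1, id2]
  have step1 : (A - 2*μ'*P + μ'^2*B)/(2*(L'-μ')) ≤ (A - 2*μ'*P + μ'^2*B)/(2*(L-μ')) := by
    apply div_le_div_of_nonneg_left h2 (by linarith) (by linarith)
  have step2 : (A - 2*μ'*P + μ'^2*B)/(2*(L-μ')) + μ'*B/2
      ≤ (A - 2*μ*P + μ^2*B)/(2*(L-μ)) + μ*B/2 := by
    have key : (A - 2*μ*P + μ^2*B)/(2*(L-μ)) + μ*B/2
        - ((A - 2*μ'*P + μ'^2*B)/(2*(L-μ')) + μ'*B/2)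
        = (μ - μ') * (A - 2*L*P + L^2*B) / (2*(L-μ)*(L-μ')) := by
      field_simp
      ring
    have hnum : 0 ≤ (μ - μ') * (A - 2*L*P + L^2*B) / (2*(L-μ)*(L-μ')) := by
      apply div_nonneg (mul_nonneg (by linarith) h1) (by positivity)
    linarith [key ▸ hnum]
  linarith

/-- Monotonicity of the interpolation inequality (6) in `μ` and `L`:
the quantity `Q(μ, L)` is non-increasing as `L` increases or `μ` decreases. -/
theorem interpolation_monotone
    (d : ℕ) (hd : 1 ≤ d)
    (p q gp gq : EuclideanSpace ℝ (Fin d)) (fp fq : ℝ)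
    (Q : ℝ → ℝ → ℝ)
    (hQ : ∀ μ L, Q μ L = fp - fq + ⟪gp, q - p⟫ + (1 / (2 * L)) * ‖gp - gq‖ ^ 2 +
      (μ * L / (2 * (L - μ))) * ‖p - q - (1 / L) • (gp - gq)‖ ^ 2)
    (μ L μ' L' : ℝ) (hμ'μ : μ' ≤ μ) (hμL : μ < L) (hLL' : L ≤ L')
    (hL : 0 < L) (hL' : 0 < L') :
    Q μ' L' ≤ Q μ L := by
  rw [hQ, hQ]
  set a := gp - gq with ha
  set b := p - q with hb
  set A := ‖a‖^2 with hA
  set B := ‖b‖^2 with hB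
  set P := ⟪b, a⟫ with hP
  have expand : ∀ c : ℝ, c ≠ 0 → ‖b - (1/c) • a‖^2 = B - (2/c)*P + (1/c)^2*A := by
    intro c hc
    rw [hA, hB, hP, @norm_sub_sq_real, real_inner_smul_right, norm_smul, mul_pow, Real.norm_eq_abs, sq_abs]
    ring
  have h1 : 0 ≤ A - 2*L*P + L^2*B := by
    have := sq_nonneg ‖a - L • b‖
    rw [@norm_sub_sq_real, real_inner_smul_right, norm_smul, mul_pow, Real.norm_eq_abs, sq_abs,
      real_inner_comm] at this
    rw [hA, hB, hP]
    nlinarith [this]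
  have h2 : 0 ≤ A - 2*μ'*P + μ'^2*B := by
    have := sq_nonneg ‖a - μ' • b‖
    rw [@norm_sub_sq_real, real_inner_smul_right, norm_smul, mul_pow, Real.norm_eq_abs, sq_abs,
      real_inner_comm] at this
    rw [hA, hB, hP]
    nlinarith [this]
  rw [expand L (ne_of_gt hL), expand L' (ne_of_gt hL')]
  have := interp_arith A B P μ L μ' L' hμ'μ hμL hLL' hL hL' h1 h2
  linarith
end
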